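/- arXiv:2503.12578 — 2 statements merged into one kernel-verified Lean document; each statement's English description precedes it below -/
import Mathlib

section
/- For simplicial complexes K and K' on disjoint vertex sets N and N', the Alexander dual of their join satisfies (K ⋆ K')* = (K ⋆ P(N'))* ∪ (K' ⋆ P(N))*, where P(S) denotes the full simplex (power set) on S and duals are taken with respect to the vertex set N ∪ N'. -/
variable {α : Type*} [DecidableEq α]

/-- A simplicial complex on vertex set `V`: faces are subsets of `V`, closed under subsets. -/
def SimpComplex (V : Finset α) (K : Set (Finset α)) : Prop :=
  (∀ σ ∈ K, σ ⊆ V) ∧ (∀ σ ∈ K, ∀ τ ⊆ σ, τ ∈ K)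

/-- Join of two complexes: all unions `σ ∪ τ` with `σ ∈ K`, `τ ∈ K'`. -/
def join (K K' : Set (Finset α)) : Set (Finset α) :=
  {s | ∃ σ ∈ K, ∃ τ ∈ K', s = σ ∪ τ}

/-- The full simplex (power set) on `V`. -/
def fullP (V : Finset α) : Set (Finset α) := {σ | σ ⊆ V}

/-- Alexander dual of `K` with respect to vertex set `V`. -/
def alexDual (V : Finset α) (K : Set (Finset α)) : Set (Finset α) :=
  {σ | σ ⊆ V ∧ V \ σ ∉ K}

lemma mem_join_iff (N N' : Finset α) (K K' : Set (Finset α))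
    (hdisj : Disjoint N N')
    (hKsub : ∀ σ ∈ K, σ ⊆ N) (hKdown : ∀ σ ∈ K, ∀ τ ⊆ σ, τ ∈ K)
    (hK'sub : ∀ σ ∈ K', σ ⊆ N') (hK'down : ∀ σ ∈ K', ∀ τ ⊆ σ, τ ∈ K')
    (s : Finset α) (hs : s ⊆ N ∪ N') :
    s ∈ join K K' ↔ s ∩ N ∈ K ∧ s ∩ N' ∈ K' := by
  constructor
  · rintro ⟨σ, hσ, τ, hτ, rfl⟩
    constructor
    · refine hKdown σ hσ _ ?_
      intro x hx
      rcases Finset.mem_inter.1 hx with ⟨hx1, hx2⟩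
      rcases Finset.mem_union.1 hx1 with h | h
      · exact h
      · exact absurd hx2 (Finset.disjoint_right.1 hdisj (hK'sub τ hτ h))
    · refine hK'down τ hτ _ ?_
      intro x hx
      rcases Finset.mem_inter.1 hx with ⟨hx1, hx2⟩
      rcases Finset.mem_union.1 hx1 with h | h
      · exact absurd hx2 (Finset.disjoint_left.1 hdisj (hKsub σ hσ h))
      · exact h
  · rintro ⟨h1, h2⟩
    refine ⟨s ∩ N, h1, s ∩ N', h2, ?_⟩
    ext x
    simp only [Finset.mem_union, Finset.mem_inter]
    constructor
    · intro hx
      rcases Finset.mem_union.1 (hs hx) with h | h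
      · exact Or.inl ⟨hx, h⟩
      · exact Or.inr ⟨hx, h⟩
    · rintro (⟨h, _⟩ | ⟨h, _⟩) <;> exact h

/-- `(K ⋆ K')* = (K ⋆ P(N'))* ∪ (K' ⋆ P(N))*`, duals w.r.t. `N ∪ N'`. -/
theorem alexDual_join (N N' : Finset α) (K K' : Set (Finset α))
    (hdisj : Disjoint N N')
    (hK : SimpComplex N K) (hK' : SimpComplex N' K')
    (hKe : ∅ ∈ K) (hK'e : ∅ ∈ K') :
    alexDual (N ∪ N') (join K K') =
      alexDual (N ∪ N') (join K (fullP N')) ∪ alexDual (N ∪ N') (join K' (fullP N)) := by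
  obtain ⟨hKsub, hKdown⟩ := hK
  obtain ⟨hK'sub, hK'down⟩ := hK'
  have hPsub : ∀ V : Finset α, ∀ σ ∈ fullP V, σ ⊆ V := fun V σ h => h
  have hPdown : ∀ V : Finset α, ∀ σ ∈ fullP V, ∀ τ ⊆ σ, τ ∈ fullP V :=
    fun V σ h τ hτ => hτ.trans h
  ext σ
  simp only [alexDual, Set.mem_setOf_eq, Set.mem_union]
  constructor
  · rintro ⟨hσ, hns⟩
    set c := (N ∪ N') \ σ with hc
    have hcsub : c ⊆ N ∪ N' := Finset.sdiff_subset
    rw [mem_join_iff N N' K K' hdisj hKsub hKdown hK'sub hK'down c hcsub] at hns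
    rw [not_and_or] at hns
    rcases hns with h | h
    · refine Or.inl ⟨hσ, fun hmem => ?_⟩
      rw [mem_join_iff N N' K (fullP N') hdisj hKsub hKdown (hPsub N') (hPdown N') c hcsub]
        at hmem
      exact h hmem.1
    · refine Or.inr ⟨hσ, fun hmem => ?_⟩
      rw [mem_join_iff N' N K' (fullP N) hdisj.symm hK'sub hK'down (hPsub N) (hPdown N) c
        (by rwa [Finset.union_comm])] at hmem
      exact h hmem.1
  · rintro (⟨hσ, hns⟩ | ⟨hσ, hns⟩) <;> refine ⟨hσ, fun hmem => hns ?_⟩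
    · set c := (N ∪ N') \ σ with hc
      have hcsub : c ⊆ N ∪ N' := Finset.sdiff_subset
      rw [mem_join_iff N N' K K' hdisj hKsub hKdown hK'sub hK'down c hcsub] at hmem
      rw [mem_join_iff N N' K (fullP N') hdisj hKsub hKdown (hPsub N') (hPdown N') c hcsub]
      exact ⟨hmem.1, Finset.inter_subset_right⟩
    · set c := (N ∪ N') \ σ with hc
      have hcsub : c ⊆ N ∪ N' := Finset.sdiff_subset
      rw [mem_join_iff N N' K K' hdisj hKsub hKdown hK'sub hK'down c hcsub] at hmem
      rw [mem_join_iff N' N K' (fullP N) hdisj.symm hK'sub hK'down (hPsub N) (hPdown N) c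
        (by rwa [Finset.union_comm])]
      exact ⟨hmem.2, Finset.inter_subset_right⟩
end

section
/- For simplicial complexes K and K' on disjoint vertex sets N and N', the join of their Alexander duals satisfies K* ⋆ K'* = ((K ⋆ P(N')) ∪ (K' ⋆ P(N)))*, where K* is taken with respect to N, K'* with respect to N', and the dual on the right with respect to N ∪ N'. -/
variable {α : Type*} [DecidableEq α]

lemma split_eq {N N' A B C D : Finset α} (hdisj : Disjoint N N')
    (hA : A ⊆ N) (hB : B ⊆ N') (hC : C ⊆ N) (hD : D ⊆ N')
    (h : A ∪ B = C ∪ D) : A = C ∧ B = D := by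
  have hd := Finset.disjoint_left.mp hdisj
  have h' : ∀ x, (x ∈ A ∨ x ∈ B) ↔ (x ∈ C ∨ x ∈ D) := by
    intro x; rw [← Finset.mem_union, ← Finset.mem_union, h]
  constructor <;> ext x <;> constructor <;> intro hx
  · rcases (h' x).1 (Or.inl hx) with h1 | h1
    · exact h1
    · exact (hd (hA hx) (hD h1)).elim
  · rcases (h' x).2 (Or.inl hx) with h1 | h1
    · exact h1
    · exact (hd (hC hx) (hB h1)).elim
  · rcases (h' x).1 (Or.inr hx) with h1 | h1
    · exact (hd (hC h1) (hB hx)).elim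
    · exact h1
  · rcases (h' x).2 (Or.inr hx) with h1 | h1
    · exact (hd (hA h1) (hD hx)).elim
    · exact h1

lemma compl_split {N N' σ τ : Finset α} (hdisj : Disjoint N N')
    (hσ : σ ⊆ N) (hτ : τ ⊆ N') :
    (N ∪ N') \ (σ ∪ τ) = (N \ σ) ∪ (N' \ τ) := by
  have hd := Finset.disjoint_left.mp hdisj
  ext x
  simp only [Finset.mem_sdiff, Finset.mem_union, not_or]
  constructor
  · rintro ⟨h1 | h1, h2, h3⟩
    · exact Or.inl ⟨h1, h2⟩
    · exact Or.inr ⟨h1, h3⟩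
  · rintro (⟨h1, h2⟩ | ⟨h1, h2⟩)
    · exact ⟨Or.inl h1, h2, fun hx => hd h1 (hτ hx)⟩
    · exact ⟨Or.inr h1, fun hx => hd (hσ hx) h1, h2⟩

/-- `K* ⋆ K'* = ((K ⋆ P(N')) ∪ (K' ⋆ P(N)))*`, where `K*` is taken w.r.t. `N`,
`K'*` w.r.t. `N'`, and the right-hand dual w.r.t. `N ∪ N'`. -/
theorem join_alexDual (N N' : Finset α) (K K' : Set (Finset α))
    (hdisj : Disjoint N N')
    (hK : SimpComplex N K) (hK' : SimpComplex N' K')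
    (hKe : ∅ ∈ K) (hK'e : ∅ ∈ K') :
    join (alexDual N K) (alexDual N' K') =
      alexDual (N ∪ N') (join K (fullP N') ∪ join K' (fullP N)) := by
  ext s
  constructor
  · rintro ⟨σ, ⟨hσN, hσK⟩, τ, ⟨hτN', hτK'⟩, rfl⟩
    refine ⟨Finset.union_subset_union hσN hτN', ?_⟩
    rw [compl_split hdisj hσN hτN']
    rintro (⟨u, huK, v, hv, heq⟩ | ⟨u, huK', v, hv, heq⟩)
    · obtain ⟨h1, -⟩ := split_eq hdisj Finset.sdiff_subset Finset.sdiff_subset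
        (hK.1 u huK) (hv : v ⊆ N') heq
      exact hσK (h1 ▸ huK)
    · obtain ⟨-, h2⟩ := split_eq hdisj Finset.sdiff_subset Finset.sdiff_subset
        (hv : v ⊆ N) (hK'.1 u huK') (heq.trans (Finset.union_comm u v))
      exact hτK' (h2 ▸ huK')
  · rintro ⟨hsub, hnot⟩
    have hdecomp : s = (s ∩ N) ∪ (s ∩ N') := by
      ext x
      simp only [Finset.mem_union, Finset.mem_inter]
      constructor
      · intro hx; rcases Finset.mem_union.1 (hsub hx) with h | h
        · exact Or.inl ⟨hx, h⟩
        · exact Or.inr ⟨hx, h⟩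
      · rintro (⟨h, -⟩ | ⟨h, -⟩) <;> exact h
    have hcompl : (N ∪ N') \ s = (N \ (s ∩ N)) ∪ (N' \ (s ∩ N')) := by
      conv_lhs => rw [hdecomp]
      exact compl_split hdisj Finset.inter_subset_right Finset.inter_subset_right
    refine ⟨s ∩ N, ⟨Finset.inter_subset_right, ?_⟩, s ∩ N', ⟨Finset.inter_subset_right, ?_⟩,
      hdecomp⟩
    · intro hmem
      exact hnot (Or.inl ⟨N \ (s ∩ N), hmem, N' \ (s ∩ N'), Finset.sdiff_subset, hcompl⟩)
    · intro hmem
      exact hnot (Or.inr ⟨N' \ (s ∩ N'), hmem, N \ (s ∩ N), Finset.sdiff_subset,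
        hcompl.trans (Finset.union_comm _ _)⟩)
end
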